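/- arXiv:1902.00376 — 6 statements merged into one kernel-verified Lean document; each statement's English description precedes it below -/
import Mathlib

section
/- Let M be an (n+2)×n matrix over a commutative ring R, and for i < j define D_{ij} = (-1)^{i+j} det(M with rows i and j deleted), extended skew-symmetrically by D_{ji} = -D_{ij} and D_{ii} = 0. Then the (n+2)×(n+2) matrix D satisfies D·M = 0. -/
/-!
Deleting row `i` of `M` leaves an `(n+1) × n` matrix `A`, and row `i` of `D` lists, up to the sign
`-(-1)^i`, the signed maximal minors `(-1)^r det(A with row r deleted)`. So `(D * M) i c` is, up to
sign, the Laplace expansion along the first column of `A` with its column `c` prepended: a square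
matrix with two equal columns, hence of determinant zero.
-/

open Matrix

theorem Matrix.sum_neg_one_pow_mul_det_submatrix_succAbove_eq_zero {R : Type*} [CommRing R]
    {n : ℕ} (A : Matrix (Fin (n + 1)) (Fin n) R) (c : Fin n) :
    ∑ r : Fin (n + 1), (-1) ^ (r : ℕ) * A r c * (A.submatrix r.succAbove id).det = 0 := by
  set B : Matrix (Fin (n + 1)) (Fin (n + 1)) R := of fun r => Fin.cons (A r c) (A r)
  have hB : B.det = 0 :=
    det_zero_of_column_eq (Fin.succ_ne_zero c).symm fun r => by simp [B]
  rw [← hB, det_succ_column_zero]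
  rfl

theorem signed_minor_apply_succAbove {R : Type*} [CommRing R] {n : ℕ}
    (M : Matrix (Fin (n + 2)) (Fin n) R)
    (D : Matrix (Fin (n + 2)) (Fin (n + 2)) R)
    (hskew : ∀ i j, D j i = -D i j)
    (hval : ∀ i j : Fin (n + 2), ∀ hij : (i : ℕ) < (j : ℕ),
      D i j = (-1) ^ ((i : ℕ) + (j : ℕ)) *
        (M.submatrix
          (fun k => j.succAbove
            ((⟨(i : ℕ), lt_of_lt_of_le hij (Nat.lt_succ_iff.mp j.isLt)⟩ : Fin (n + 1)).succAbove k))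
          id).det) (i : Fin (n + 2)) (r : Fin (n + 1)) :
    D i (i.succAbove r) =
      -(-1) ^ ((i : ℕ) + r) * ((M.submatrix i.succAbove id).submatrix r.succAbove id).det := by
  rw [submatrix_submatrix, Function.id_comp]
  rcases Fin.lt_or_le r.castSucc i with h | h
  · rw [Fin.succAbove_of_castSucc_lt i r h, hskew, hval r.castSucc i h]
    simp only [Fin.val_castSucc, Fin.eta, neg_mul, add_comm]
    rfl
  · have hlt : (i : ℕ) < r.succ := Nat.lt_succ_of_le h
    rw [Fin.succAbove_of_le_castSucc i r h, hval i r.succ hlt]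
    have hpred : r.predAbove i = ⟨i, lt_of_lt_of_le hlt (Nat.lt_succ_iff.mp r.succ.isLt)⟩ := by
      rw [Fin.predAbove_of_le_castSucc _ _ h]
      rfl
    have hrows : (fun k => r.succ.succAbove ((r.predAbove i).succAbove k)) =
        i.succAbove ∘ r.succAbove := by
      rw [← Fin.succAbove_of_le_castSucc i r h]
      exact funext (Fin.succAbove_succAbove_succAbove_predAbove i r)
    rw [← hpred, hrows, Fin.val_succ]
    ring

/-- Let `M` be an `(n+2) × n` matrix over a commutative ring `R`.  For `i < j` let
`D i j = (-1)^(i+j) det(M with rows i and j deleted)`, extended skew-symmetrically with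
zero diagonal.  Then `D * M = 0`. -/
theorem signed_minor_matrix_mul_eq_zero {R : Type*} [CommRing R] {n : ℕ}
    (M : Matrix (Fin (n + 2)) (Fin n) R)
    (D : Matrix (Fin (n + 2)) (Fin (n + 2)) R)
    (hdiag : ∀ i, D i i = 0)
    (hskew : ∀ i j, D j i = -D i j)
    (hval : ∀ i j : Fin (n + 2), ∀ hij : (i : ℕ) < (j : ℕ),
      D i j = (-1) ^ ((i : ℕ) + (j : ℕ)) *
        (M.submatrix
          (fun k => j.succAbove
            ((⟨(i : ℕ), lt_of_lt_of_le hij (Nat.lt_succ_iff.mp j.isLt)⟩ : Fin (n + 1)).succAbove k))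
          id).det) :
    D * M = 0 := by
  ext i c
  set A := M.submatrix i.succAbove id
  calc (D * M) i c = ∑ r, D i (i.succAbove r) * A r c := by
        rw [mul_apply, Fin.sum_univ_succAbove _ i, hdiag, zero_mul, zero_add]
        rfl
    _ = -(-1) ^ (i : ℕ) * ∑ r : Fin (n + 1), (-1) ^ (r : ℕ) * A r c *
          (A.submatrix r.succAbove id).det := by
        simp only [signed_minor_apply_succAbove M D hskew hval, Finset.mul_sum, pow_add]
        refine Finset.sum_congr rfl fun r _ => ?_
        ring
    _ = 0 := by
        rw [A.sum_neg_one_pow_mul_det_submatrix_succAbove_eq_zero c, mul_zero]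
end

section
/- Let A be a 2×2 matrix of linear forms over R = K[x_0,…,x_r] (char K ≠ 2) whose first column entries a_{11}, a_{21} are linearly independent, and suppose det(A) = u·v for linear forms u, v with a_{11}, a_{21}, u linearly independent. Then there exist constants x_1, x_2, x_3 ∈ K such that, after replacing the second column C_2 by C_2 - x_3·C_1, the second column of A equals (-x_1·u, x_2·u)ᵀ; in particular its two entries are K-linearly dependent. -/
open MvPolynomial

/-!
Let `φ` be a linear functional on the linear forms and `D` the derivation of `K[x]` with
`D x_i = φ(x_i)`, so that `D ℓ = φ(ℓ)` for every linear form `ℓ`. If `φ` is dual to `a₁₁`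
among `a₁₁, a₂₁, u`, applying `D` to `a₁₁a₂₂ - a₂₁a₁₂ = uv` gives
`a₂₂ + φ(a₂₂)a₁₁ = φ(a₁₂)a₂₁ + φ(v)u`, and applying `φ` to this yields `2φ(a₂₂) = 0`. Hence
`a₂₂ ∈ φ(a₁₂)a₂₁ + Ku`; symmetrically `a₁₂ ∈ ψ(a₂₂)a₁₁ + Ku` for `ψ` dual to `a₂₁`, and applying
`φ` to the latter shows that the two constants `φ(a₁₂)` and `ψ(a₂₂)` agree.
-/

theorem Submodule.exists_linearMap_eq_one_of_notMem_span_pair {K V : Type*} [Field K]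
    [AddCommGroup V] [Module K V] {x y z : V} (h : x ∉ span K {y, z}) :
    ∃ φ : V →ₗ[K] K, φ x = 1 ∧ φ y = 0 ∧ φ z = 0 := by
  obtain ⟨f, hfx, hle⟩ := exists_le_ker_of_notMem h
  have hy : f y = 0 := hle (subset_span (by simp))
  have hz : f z = 0 := hle (subset_span (by simp))
  exact ⟨(f x)⁻¹ • f, by simp [hfx], by simp [hy], by simp [hz]⟩

namespace MvPolynomial

variable {σ R : Type*} [CommSemiring R]

noncomputable def derivationOfLinearMap (φ : MvPolynomial σ R →ₗ[R] R) :
    Derivation R (MvPolynomial σ R) (MvPolynomial σ R) :=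
  mkDerivation R fun i => C (φ (X i))

theorem derivationOfLinearMap_of_isHomogeneous_one (φ : MvPolynomial σ R →ₗ[R] R)
    {p : MvPolynomial σ R} (hp : p.IsHomogeneous 1) :
    derivationOfLinearMap φ p = C (φ p) := by
  have hspan : p ∈ Submodule.span R (Set.range X) := by
    rw [← homogeneousSubmodule_one_eq_span_X]
    exact hp
  refine LinearMap.eqOn_span (f := (derivationOfLinearMap φ).toLinearMap)
    (g := (Algebra.linearMap R _).comp φ) ?_ hspan
  rintro _ ⟨i, rfl⟩
  simp [derivationOfLinearMap, mkDerivation_X]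

variable {K : Type*} [Field K]

theorem eq_C_mul_add_C_mul_of_mul_sub_mul_eq_mul (h2 : (2 : K) ≠ 0)
    {a b c d u v : MvPolynomial σ K} (ha : a.IsHomogeneous 1) (hb : b.IsHomogeneous 1)
    (hc : c.IsHomogeneous 1) (hd : d.IsHomogeneous 1) (hu : u.IsHomogeneous 1)
    (hv : v.IsHomogeneous 1) {φ : MvPolynomial σ K →ₗ[K] K} (hφa : φ a = 1) (hφb : φ b = 0)
    (hφu : φ u = 0) (h : a * c - b * d = u * v) :
    c = C (φ d) * b + C (φ v) * u := by
  have hD := congrArg (derivationOfLinearMap φ) h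
  simp only [map_sub, Derivation.leibniz, smul_eq_mul,
    derivationOfLinearMap_of_isHomogeneous_one φ ha, derivationOfLinearMap_of_isHomogeneous_one φ hb,
    derivationOfLinearMap_of_isHomogeneous_one φ hc, derivationOfLinearMap_of_isHomogeneous_one φ hd,
    derivationOfLinearMap_of_isHomogeneous_one φ hu, derivationOfLinearMap_of_isHomogeneous_one φ hv,
    hφa, hφb, hφu, map_one, map_zero] at hD
  have hc' : c = C (φ d) * b + C (φ v) * u - C (φ c) * a := by linear_combination hD
  have hφc : φ c = 0 := by
    have := congrArg φ hc'
    simp only [map_add, map_sub, C_mul', map_smul, smul_eq_mul, hφa, hφb, hφu] at this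
    exact (mul_eq_zero.mp (by linear_combination this : (2 : K) * φ c = 0)).resolve_left h2
  simpa [hφc] using hc'

end MvPolynomial

/-- Lemma on `2 × 2` matrices of linear forms (case `a₁₁, a₂₁, u` independent):
if `det A = u·v` with `a₁₁, a₂₁, u` linearly independent linear forms, then after a column
operation `C₂ - x₃·C₁` the second column of `A` becomes `(-x₁·u, x₂·u)ᵀ` for constants
`x₁, x₂, x₃`. -/
theorem two_by_two_det_factors_column_dependent
    {K : Type*} [Field K] (h2 : (2 : K) ≠ 0) {r : ℕ}
    (a11 a12 a21 a22 u v : MvPolynomial (Fin (r + 1)) K)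
    (h11 : a11.IsHomogeneous 1) (h12 : a12.IsHomogeneous 1)
    (h21 : a21.IsHomogeneous 1) (h22 : a22.IsHomogeneous 1)
    (hu : u.IsHomogeneous 1) (hv : v.IsHomogeneous 1)
    (hind : ∀ c1 c2 c3 : K, c1 • a11 + c2 • a21 + c3 • u = 0 → c1 = 0 ∧ c2 = 0 ∧ c3 = 0)
    (hdet : a11 * a22 - a21 * a12 = u * v) :
    ∃ x1 x2 x3 : K,
      a12 - C x3 * a11 = -(C x1 * u) ∧ a22 - C x3 * a21 = C x2 * u := by
  have ha11 : a11 ∉ Submodule.span K {a21, u} := fun h ↦ by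
    obtain ⟨s, t, hst⟩ := Submodule.mem_span_pair.mp h
    exact one_ne_zero (hind 1 (-s) (-t) (by rw [← hst]; module)).1
  have ha21 : a21 ∉ Submodule.span K {a11, u} := fun h ↦ by
    obtain ⟨s, t, hst⟩ := Submodule.mem_span_pair.mp h
    exact one_ne_zero (hind (-s) 1 (-t) (by rw [← hst]; module)).2.1
  obtain ⟨φ, hφa11, hφa21, hφu⟩ :=
    Submodule.exists_linearMap_eq_one_of_notMem_span_pair ha11
  obtain ⟨ψ, hψa21, hψa11, hψu⟩ :=
    Submodule.exists_linearMap_eq_one_of_notMem_span_pair ha21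
  have he22 : a22 = C (φ a12) * a21 + C (φ v) * u :=
    eq_C_mul_add_C_mul_of_mul_sub_mul_eq_mul h2 h11 h21 h22 h12 hu hv hφa11 hφa21 hφu hdet
  have he12 : a12 = C (ψ a22) * a11 + C (ψ v) * -u :=
    eq_C_mul_add_C_mul_of_mul_sub_mul_eq_mul h2 h21 h11 h12 h22 hu.neg hv hψa21 hψa11
      (by rw [map_neg, hψu, neg_zero]) (by linear_combination -hdet)
  have hx3 : ψ a22 = φ a12 := by
    simpa [C_mul', hφa11, hφu] using (congrArg φ he12).symm
  refine ⟨ψ v, φ v, φ a12, ?_, ?_⟩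
  · rw [← hx3]
    linear_combination he12
  · linear_combination he22
end

section
/- Let A be a 2×2 matrix of linear forms over R = K[x_0,…,x_r] with a_{11}, a_{21} linearly independent, and suppose det(A) = u·v where u = α·a_{11} + β·a_{21} for some α, β ∈ K and v is a linear form. Then there exists γ ∈ K such that a_{22} = α·v + γ·a_{21} and a_{12} = -β·v + γ·a_{11}; in particular, after the column operation C_2 - γ·C_1, the entries of the second column of A are scalar multiples of two fixed linear forms lying in span{v}. -/
/-!
Substituting `u = α a₁₁ + β a₂₁` turns `det A = u v` into the syzygy
`a₁₁ (a₂₂ - α v) = a₂₁ (a₁₂ + β v)`. A nonzero linear form is irreducible, hence prime in the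
factorial ring `K[x₀, …, x_r]`, and by linear independence `a₁₁` does not divide `a₂₁`. So `a₁₁`
divides the linear form `a₁₂ + β v`, with a quotient that is a constant `γ` by degree, and
cancelling `a₁₁` in the syzygy gives `a₂₂ - α v = γ a₂₁`.
-/

open MvPolynomial

namespace MvPolynomial

theorem prime_of_isHomogeneous_one {σ K : Type*} [Field K] {f : MvPolynomial σ K}
    (hf : f.IsHomogeneous 1) (hf0 : f ≠ 0) : Prime f := by
  refine UniqueFactorizationMonoid.irreducible_iff_prime.mp <|
    irreducible_of_totalDegree_eq_one (hf.totalDegree hf0) fun x hx => ?_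
  refine isUnit_iff_ne_zero.mpr fun hx0 => hf0 ?_
  ext m
  simpa [hx0] using hx m

theorem exists_C_mul_eq_of_dvd {σ R : Type*} [CommRing R] [IsDomain R]
    {a q : MvPolynomial σ R} (ha : a.IsHomogeneous 1) (ha0 : a ≠ 0) (hq : q.IsHomogeneous 1)
    (hdvd : a ∣ q) : ∃ c : R, q = C c * a := by
  obtain ⟨b, rfl⟩ := hdvd
  obtain rfl | hb0 := eq_or_ne b 0
  · exact ⟨0, by simp⟩
  have hdeg : a.totalDegree + b.totalDegree = a.totalDegree := by
    rw [← totalDegree_mul_of_isDomain ha0 hb0, hq.totalDegree (mul_ne_zero ha0 hb0),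
      ha.totalDegree ha0]
  refine ⟨coeff 0 b, ?_⟩
  rw [mul_comm, ← totalDegree_eq_zero_iff_eq_C.mp (by omega)]

end MvPolynomial

theorem two_by_two_det_factors_u_in_span_general
    {K : Type*} [Field K] {r : ℕ}
    (a11 a12 a21 a22 u v : MvPolynomial (Fin (r + 1)) K)
    (h11 : a11.IsHomogeneous 1) (h12 : a12.IsHomogeneous 1)
    (h21 : a21.IsHomogeneous 1)
    (hv : v.IsHomogeneous 1)
    (hind : ∀ c d : K, c • a11 + d • a21 = 0 → c = 0 ∧ d = 0)
    (α β : K) (huspan : u = C α * a11 + C β * a21)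
    (hdet : a11 * a22 - a21 * a12 = u * v) :
    ∃ γ : K, a22 = C α * v + C γ * a21 ∧ a12 = -(C β * v) + C γ * a11 := by
  have ha11 : a11 ≠ 0 := fun h => one_ne_zero (hind 1 0 (by simp [h])).1
  have hsyz : a11 * (a22 - C α * v) = a21 * (a12 + C β * v) := by
    rw [huspan] at hdet
    linear_combination hdet
  have hndvd : ¬ a11 ∣ a21 := by
    intro hdvd
    obtain ⟨c, hc⟩ := exists_C_mul_eq_of_dvd h11 ha11 h21 hdvd
    refine neg_ne_zero.mpr one_ne_zero (hind c (-1) ?_).2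
    rw [smul_eq_C_mul, smul_eq_C_mul, hc, map_neg, map_one]
    ring
  obtain ⟨γ, hγ⟩ := exists_C_mul_eq_of_dvd h11 ha11 (h12.add (hv.C_mul β)) <|
    ((prime_of_isHomogeneous_one h11 ha11).dvd_or_dvd ⟨_, hsyz.symm⟩).resolve_left hndvd
  have h22 : a22 - C α * v = C γ * a21 :=
    mul_left_cancel₀ ha11 (by rw [hsyz, hγ]; ring)
  exact ⟨γ, by linear_combination h22, by linear_combination hγ⟩

/-- Lemma on `2 × 2` matrices of linear forms (case `u ∈ span{a₁₁, a₂₁}`):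
if `det A = u·v` with `u = α·a₁₁ + β·a₂₁`, then there is `γ ∈ K` with
`a₂₂ = α·v + γ·a₂₁` and `a₁₂ = -β·v + γ·a₁₁`. -/
theorem two_by_two_det_factors_u_in_span
    {K : Type*} [Field K] {r : ℕ}
    (a11 a12 a21 a22 u v : MvPolynomial (Fin (r + 1)) K)
    (h11 : a11.IsHomogeneous 1) (h12 : a12.IsHomogeneous 1)
    (h21 : a21.IsHomogeneous 1) (h22 : a22.IsHomogeneous 1)
    (hu : u.IsHomogeneous 1) (hv : v.IsHomogeneous 1)
    (hind : ∀ c d : K, c • a11 + d • a21 = 0 → c = 0 ∧ d = 0)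
    (α β : K) (huspan : u = C α * a11 + C β * a21)
    (hdet : a11 * a22 - a21 * a12 = u * v) :
    ∃ γ : K, a22 = C α * v + C γ * a21 ∧ a12 = -(C β * v) + C γ * a11 :=
  two_by_two_det_factors_u_in_span_general a11 a12 a21 a22 u v h11 h12 h21 hv hind α β huspan hdet
end

section
/- Let R = K[x_0,…,x_4] and let n_{22}, n_{31}, n_{41}, n_{42} be linear forms such that (n_{22}, n_{42}) and (n_{31}, n_{41}) are regular sequences and the four forms are in sufficiently general position (e.g. all four K-linearly independent). Then ⟨n_{22}n_{31}, n_{22}n_{41}, n_{31}n_{42}, n_{41}n_{42}⟩ = ⟨n_{22}, n_{42}⟩ ∩ ⟨n_{31}, n_{41}⟩. -/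
/-!
A linear change of coordinates turns the four independent linear forms into the variables
`x₀, x₁, x₂, x₃`. The left-hand ideal is the product `⟨n₂₂, n₄₂⟩ ⟨n₃₁, n₄₁⟩`, and for ideals
generated by disjoint sets of variables the product equals the intersection: a monomial lying in
both contains a variable from each set, hence is divisible by one of the generating products.
-/

open MvPolynomial
open scoped Pointwise

theorem Finsupp.single_one_add_single_one_le {σ : Type*} {i j : σ} (hij : i ≠ j)
    {m : σ →₀ ℕ} (hi : m i ≠ 0) (hj : m j ≠ 0) : single i 1 + single j 1 ≤ m := by
  classical
  intro k
  simp only [Finsupp.add_apply, Finsupp.single_apply]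
  split_ifs <;> grind

theorem Ideal.map_mul_eq_map_inf {R S : Type*} [CommSemiring R] [CommSemiring S] (e : R ≃+* S)
    {I J : Ideal R} (h : I * J = I ⊓ J) : I.map e * J.map e = I.map e ⊓ J.map e := by
  rw [← Ideal.map_mul, h]
  simp only [← Ideal.comap_symm, Ideal.comap_inf]

namespace MvPolynomial

theorem span_X_image_mul_span_X_image {σ R : Type*} [CommSemiring R] {s t : Set σ}
    (hst : Disjoint s t) :
    Ideal.span (X '' s : Set (MvPolynomial σ R)) * Ideal.span (X '' t) =
      Ideal.span (X '' s) ⊓ Ideal.span (X '' t) := by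
  refine le_antisymm Ideal.mul_le_inf ?_
  intro f hf
  simp only [Submodule.mem_inf, mem_ideal_span_X_image] at hf
  have hprod : (X '' s : Set (MvPolynomial σ R)) * X '' t = (fun d => monomial d (1 : R)) ''
      Set.image2 (fun i j => Finsupp.single i 1 + Finsupp.single j 1) s t := by
    rw [← Set.image2_mul, Set.image_image2, Set.image2_image_left, Set.image2_image_right]
    simp only [X, monomial_mul, one_mul]
  rw [Ideal.span_mul_span', hprod, mem_ideal_span_monomial_image]
  intro m hm
  obtain ⟨i, hi, hmi⟩ := hf.1 m hm
  obtain ⟨j, hj, hmj⟩ := hf.2 m hm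
  exact ⟨_, Set.mem_image2_of_mem hi hj,
    Finsupp.single_one_add_single_one_le (hst.ne_of_mem hi hj) hmi hmj⟩

theorem IsHomogeneous.exists_eq_sum_smul_X {σ R : Type*} [Fintype σ] [CommSemiring R]
    {p : MvPolynomial σ R} (hp : p.IsHomogeneous 1) : ∃ c : σ → R, ∑ j, c j • X j = p := by
  rw [← mem_homogeneousSubmodule, homogeneousSubmodule_one_eq_span_X] at hp
  exact Submodule.mem_span_range_iff_exists_fun R |>.mp hp

section LinearSubst

variable {σ R : Type*} [Fintype σ] [CommSemiring R]

noncomputable def linearSubst (M : Matrix σ σ R) : MvPolynomial σ R →ₐ[R] MvPolynomial σ R :=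
  aeval fun i => ∑ j, M i j • X j

@[simp]
theorem linearSubst_X (M : Matrix σ σ R) (i : σ) : linearSubst M (X i) = ∑ j, M i j • X j :=
  aeval_X _ _

theorem linearSubst_comp_linearSubst (A B : Matrix σ σ R) :
    (linearSubst A).comp (linearSubst B) = linearSubst (B * A) := by
  refine algHom_ext fun i => ?_
  simp only [AlgHom.comp_apply, linearSubst_X, map_sum, map_smul, Finset.smul_sum, smul_smul,
    Matrix.mul_apply, Finset.sum_smul]
  exact Finset.sum_comm

theorem linearSubst_one [DecidableEq σ] : linearSubst (1 : Matrix σ σ R) = AlgHom.id R _ := by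
  refine algHom_ext fun i => ?_
  simp [Matrix.one_apply, ite_smul]

noncomputable def linearSubstEquiv [DecidableEq σ] (M : (Matrix σ σ R)ˣ) :
    MvPolynomial σ R ≃ₐ[R] MvPolynomial σ R :=
  AlgEquiv.ofAlgHom (linearSubst M) (linearSubst ↑M⁻¹)
    (by rw [linearSubst_comp_linearSubst, M.inv_mul, linearSubst_one])
    (by rw [linearSubst_comp_linearSubst, M.mul_inv, linearSubst_one])

@[simp]
theorem linearSubstEquiv_X [DecidableEq σ] (M : (Matrix σ σ R)ˣ) (i : σ) :
    linearSubstEquiv M (X i) = ∑ j, (M : Matrix σ σ R) i j • X j :=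
  linearSubst_X _ _

end LinearSubst

theorem exists_algEquiv_X_castSucc_eq {K : Type*} [Field K] {m : ℕ}
    (v : Fin m → MvPolynomial (Fin (m + 1)) K) (hv : ∀ i, (v i).IsHomogeneous 1)
    (hind : LinearIndependent K v) :
    ∃ e : MvPolynomial (Fin (m + 1)) K ≃ₐ[K] MvPolynomial (Fin (m + 1)) K,
      ∀ i, e (X i.castSucc) = v i := by
  choose c hc using fun i => (hv i).exists_eq_sum_smul_X
  have hc_ind : LinearIndependent K c := by
    refine LinearIndependent.of_comp
      (Fintype.linearCombination K (X : Fin (m + 1) → MvPolynomial (Fin (m + 1)) K)) ?_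
    convert hind
    funext i
    exact (Fintype.linearCombination_apply _ _ _).trans (hc i)
  obtain ⟨x, hx⟩ := exists_linearIndependent_snoc_of_lt_finrank hc_ind (by simp)
  have hA : IsUnit (Matrix.of (Fin.snoc c x)) := Matrix.linearIndependent_rows_iff_isUnit.mp hx
  exact ⟨linearSubstEquiv hA.unit, fun i => by simp [hc]⟩

end MvPolynomial

/-- For four linearly independent linear forms `n₂₂, n₃₁, n₄₁, n₄₂` in `K[x₀,…,x₄]`, the
ideal generated by the four products `n₂₂n₃₁, n₂₂n₄₁, n₃₁n₄₂, n₄₁n₄₂` equals the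
intersection `⟨n₂₂, n₄₂⟩ ∩ ⟨n₃₁, n₄₁⟩`. -/
theorem ideal_of_products_eq_inter
    {K : Type*} [Field K]
    (n22 n31 n41 n42 : MvPolynomial (Fin 5) K)
    (h22 : n22.IsHomogeneous 1) (h31 : n31.IsHomogeneous 1)
    (h41 : n41.IsHomogeneous 1) (h42 : n42.IsHomogeneous 1)
    (hind : LinearIndependent K ![n22, n31, n41, n42]) :
    Ideal.span {n22 * n31, n22 * n41, n31 * n42, n41 * n42} =
      Ideal.span {n22, n42} ⊓ Ideal.span {n31, n41} := by
  obtain ⟨e, he⟩ := exists_algEquiv_X_castSucc_eq ![n22, n31, n41, n42]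
    (by simp [Fin.forall_fin_succ, h22, h31, h41, h42]) hind
  have hvars := Ideal.map_mul_eq_map_inf (e : MvPolynomial (Fin 5) K ≃+* MvPolynomial (Fin 5) K)
    (span_X_image_mul_span_X_image (R := K) (s := {0, 3}) (t := {1, 2})
      (by simp [Set.disjoint_left]))
  have h0 : e (X 0) = n22 := he 0
  have h1 : e (X 1) = n31 := he 1
  have h2 : e (X 2) = n41 := he 2
  have h3 : e (X 3) = n42 := he 3
  rw [mul_comm n31, mul_comm n41, ← Ideal.span_pair_mul_span_pair]
  simpa only [Ideal.map_span, Set.image_pair, AlgEquiv.coe_ringEquiv, h0, h1, h2, h3] using hvars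
end

section
/- Let R = K[x_0,…,x_4] and let n_{13}, n_{31}, n_{41}, n_{42}, n_{23}, n_{33}, n_{43} be linear forms with n_{13}, n_{31}, n_{41}, n_{42} K-linearly independent. Set q = n_{31}n_{43} - n_{42}n_{23} - n_{41}n_{33}. Then ⟨n_{13}n_{31}, n_{13}n_{41}, n_{13}n_{42}, q⟩ = ⟨n_{13}, q⟩ ∩ ⟨n_{31}, n_{41}, n_{42}⟩. -/
open MvPolynomial

section Aux

variable {K : Type*} [Field K]

private lemma degree_one_single {σ : Type*} {d : σ →₀ ℕ} (hd : Finsupp.degree d = 1) :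
    ∃ j, d = Finsupp.single j 1 := by
  have hne : d ≠ 0 := by
    intro h
    rw [h, map_zero] at hd
    omega
  have hcard : d.support.card ≤ 1 := by
    have h1 : d.support.card ≤ ∑ i ∈ d.support, d i := by
      calc d.support.card = ∑ _i ∈ d.support, 1 := by simp
        _ ≤ ∑ i ∈ d.support, d i := Finset.sum_le_sum (fun i hi =>
            Nat.one_le_iff_ne_zero.mpr (Finsupp.mem_support_iff.mp hi))
    simpa [Finsupp.degree] using h1.trans_eq hd
  obtain ⟨j, hj⟩ := Finset.card_eq_one.mp (le_antisymm hcard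
    (Finset.card_pos.mpr (Finsupp.support_nonempty_iff.mpr hne)))
  obtain ⟨hj0, hjd⟩ := Finsupp.support_eq_singleton.mp hj
  have hdj : d j = 1 := by
    have h1 : d j ≤ 1 := by
      have := Finsupp.le_degree j d
      omega
    omega
  exact ⟨j, by rw [hjd, hdj]⟩

private lemma homog_one_repr {n : ℕ} {p : MvPolynomial (Fin n) K}
    (hp : p.IsHomogeneous 1) :
    p = ∑ j, MvPolynomial.coeff (Finsupp.single j 1) p • X j := by
  apply MvPolynomial.ext
  intro m
  rw [coeff_sum]
  simp only [coeff_smul, smul_eq_mul, coeff_X']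
  by_cases h : ∃ j, m = Finsupp.single j 1
  · obtain ⟨j, rfl⟩ := h
    rw [Finset.sum_eq_single j]
    · simp
    · intro b _ hb
      rw [if_neg]
      · ring
      · intro hbj
        exact hb ((Finsupp.single_left_inj one_ne_zero).mp hbj)
    · simp
  · rw [hp.coeff_eq_zero]
    · symm
      apply Finset.sum_eq_zero
      intro j _
      rw [if_neg]
      · ring
      · intro hj
        exact h ⟨j, hj.symm⟩
    · intro hdeg
      obtain ⟨j, hj⟩ := degree_one_single hdeg
      exact h ⟨j, hj⟩

private lemma key_step {σ : Type*} {s : Set σ} {i : σ} (hi : i ∉ s)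
    {a : MvPolynomial σ K} (h : X i * a ∈ Ideal.span (X '' s : Set (MvPolynomial σ K))) :
    a ∈ Ideal.span (X '' s : Set (MvPolynomial σ K)) := by
  rw [mem_ideal_span_X_image] at h ⊢
  intro m hm
  have hm' : Finsupp.single i 1 + m ∈ (X i * a).support := by
    rw [support_X_mul]
    exact Finset.mem_map_of_mem _ hm
  obtain ⟨j, hjs, hj⟩ := h _ hm'
  refine ⟨j, hjs, fun h0 => hj ?_⟩
  rw [Finsupp.add_apply, h0, add_zero]
  exact Finsupp.single_eq_of_ne (fun hij => hi (hij ▸ hjs))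

private lemma reduced_identity {Q : MvPolynomial (Fin 5) K}
    (hQ : Q ∈ Ideal.span ({X 2, X 3, X 4} : Set (MvPolynomial (Fin 5) K))) :
    Ideal.span {X 1 * X 2, X 1 * X 3, X 1 * X 4, Q} =
      Ideal.span {(X 1 : MvPolynomial (Fin 5) K), Q} ⊓ Ideal.span {X 2, X 3, X 4} := by
  have hXs : Ideal.span ({X 2, X 3, X 4} : Set (MvPolynomial (Fin 5) K)) =
      Ideal.span (X '' ({2, 3, 4} : Set (Fin 5))) := by
    rw [Set.image_insert_eq, Set.image_insert_eq, Set.image_singleton]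
  apply le_antisymm
  · rw [Ideal.span_le]
    rintro p hp
    simp only [Set.mem_insert_iff, Set.mem_singleton_iff] at hp
    rcases hp with rfl | rfl | rfl | rfl
    · exact Submodule.mem_inf.mpr ⟨Ideal.mul_mem_right _ _ (Ideal.subset_span (by simp)),
        Ideal.mul_mem_left _ _ (Ideal.subset_span (by simp))⟩
    · exact Submodule.mem_inf.mpr ⟨Ideal.mul_mem_right _ _ (Ideal.subset_span (by simp)),
        Ideal.mul_mem_left _ _ (Ideal.subset_span (by simp))⟩
    · exact Submodule.mem_inf.mpr ⟨Ideal.mul_mem_right _ _ (Ideal.subset_span (by simp)),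
        Ideal.mul_mem_left _ _ (Ideal.subset_span (by simp))⟩
    · exact Submodule.mem_inf.mpr ⟨Ideal.subset_span (by simp), hQ⟩
  · have hmul : ∀ c ∈ Ideal.span ({X 2, X 3, X 4} : Set (MvPolynomial (Fin 5) K)),
        c * X 1 ∈ Ideal.span ({X 1 * X 2, X 1 * X 3, X 1 * X 4, Q} :
          Set (MvPolynomial (Fin 5) K)) := by
      intro c hc
      induction hc using Submodule.span_induction with
      | mem x hx =>
        simp only [Set.mem_insert_iff, Set.mem_singleton_iff] at hx
        rcases hx with rfl | rfl | rfl
        · have h' : (X 2 : MvPolynomial (Fin 5) K) * X 1 = X 1 * X 2 := by ring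
          rw [h']; exact Ideal.subset_span (by simp)
        · have h' : (X 3 : MvPolynomial (Fin 5) K) * X 1 = X 1 * X 3 := by ring
          rw [h']; exact Ideal.subset_span (by simp)
        · have h' : (X 4 : MvPolynomial (Fin 5) K) * X 1 = X 1 * X 4 := by ring
          rw [h']; exact Ideal.subset_span (by simp)
      | zero => simp
      | add x y _ _ hx hy => rw [add_mul]; exact add_mem hx hy
      | smul r x _ hx =>
        rw [smul_eq_mul, mul_assoc]
        exact Ideal.mul_mem_left _ _ hx
    rintro p hp
    obtain ⟨hp1, hp2⟩ := Submodule.mem_inf.mp hp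
    obtain ⟨a, b, hab⟩ := Ideal.mem_span_pair.mp hp1
    have haX : X 1 * a ∈ Ideal.span ({X 2, X 3, X 4} : Set (MvPolynomial (Fin 5) K)) := by
      have hsub : p - b * Q ∈ Ideal.span ({X 2, X 3, X 4} : Set (MvPolynomial (Fin 5) K)) :=
        Submodule.sub_mem _ hp2 (Ideal.mul_mem_left _ _ hQ)
      have heq : X 1 * a = p - b * Q := by linear_combination hab
      rwa [heq]
    have ha : a ∈ Ideal.span ({X 2, X 3, X 4} : Set (MvPolynomial (Fin 5) K)) := by
      rw [hXs] at haX ⊢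
      exact key_step (by decide) haX
    have haX1 := hmul a ha
    rw [← hab]
    exact add_mem haX1 (Ideal.mul_mem_left _ _ (Ideal.subset_span (by simp)))

noncomputable def linHom {n : ℕ} (A : Matrix (Fin n) (Fin n) K) :
    MvPolynomial (Fin n) K →ₐ[K] MvPolynomial (Fin n) K :=
  aeval fun i => ∑ j, A i j • X j

lemma linHom_X {n : ℕ} (A : Matrix (Fin n) (Fin n) K) (i : Fin n) :
    linHom A (X i) = ∑ j, A i j • X j :=
  aeval_X _ _

lemma linHom_comp {n : ℕ} (A B : Matrix (Fin n) (Fin n) K) :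
    (linHom A).comp (linHom B) = linHom (B * A) := by
  apply algHom_ext
  intro i
  simp only [AlgHom.comp_apply, linHom_X, map_sum, map_smul, linHom_X]
  simp_rw [Finset.smul_sum, smul_smul]
  rw [Finset.sum_comm]
  simp [Matrix.mul_apply, Finset.sum_smul]

lemma linHom_one {n : ℕ} : linHom (1 : Matrix (Fin n) (Fin n) K) = AlgHom.id K _ := by
  apply algHom_ext
  intro i
  simp [linHom_X, Matrix.one_apply, ite_smul]

noncomputable def linEquiv {n : ℕ} (A : Matrix (Fin n) (Fin n) K) (hA : IsUnit A) :
    MvPolynomial (Fin n) K ≃ₐ[K] MvPolynomial (Fin n) K :=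
  AlgEquiv.ofAlgHom (linHom A) (linHom A⁻¹)
    (by rw [linHom_comp, Matrix.nonsing_inv_mul _ (A.isUnit_iff_isUnit_det.mp hA), linHom_one])
    (by rw [linHom_comp, Matrix.mul_nonsing_inv _ (A.isUnit_iff_isUnit_det.mp hA), linHom_one])

lemma map_inf_ringEquiv {R S : Type*} [CommRing R] [CommRing S] (e : R ≃+* S)
    (I J : Ideal R) :
    Ideal.map e (I ⊓ J) = Ideal.map e I ⊓ Ideal.map e J := by
  rw [← Ideal.comap_symm, ← Ideal.comap_symm, ← Ideal.comap_symm, Ideal.comap_inf]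

end Aux

/-- With `q = n₃₁n₄₃ - n₄₂n₂₃ - n₄₁n₃₃`, and `n₁₃, n₃₁, n₄₁, n₄₂` linearly independent
linear forms, the ideal `⟨n₁₃n₃₁, n₁₃n₄₁, n₁₃n₄₂, q⟩` equals
`⟨n₁₃, q⟩ ⊓ ⟨n₃₁, n₄₁, n₄₂⟩`. -/
theorem residual_ideal_of_ND
    {K : Type*} [Field K]
    (n13 n23 n31 n33 n41 n42 n43 : MvPolynomial (Fin 5) K)
    (h13 : n13.IsHomogeneous 1) (h23 : n23.IsHomogeneous 1)
    (h31 : n31.IsHomogeneous 1) (h33 : n33.IsHomogeneous 1)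
    (h41 : n41.IsHomogeneous 1) (h42 : n42.IsHomogeneous 1)
    (h43 : n43.IsHomogeneous 1)
    (hind : LinearIndependent K ![n13, n31, n41, n42]) :
    Ideal.span {n13 * n31, n13 * n41, n13 * n42, n31 * n43 - n42 * n23 - n41 * n33} =
      Ideal.span {n13, n31 * n43 - n42 * n23 - n41 * n33} ⊓ Ideal.span {n31, n41, n42} := by
  set v : Fin 4 → MvPolynomial (Fin 5) K := ![n13, n31, n41, n42] with hv
  have hvh : ∀ i, (v i).IsHomogeneous 1 := by
    intro i
    fin_cases i <;> simpa [hv]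
  set M : Fin 4 → Fin 5 → K := fun i j => coeff (Finsupp.single j 1) (v i) with hMdef
  have hrepr : ∀ i, v i = ∑ j, M i j • X j := fun i => homog_one_repr (hvh i)
  have hM : LinearIndependent K M := by
    rw [Fintype.linearIndependent_iff] at hind ⊢
    intro g hg
    apply hind g
    have hsumh : (∑ i, g i • v i) ∈ homogeneousSubmodule (Fin 5) K 1 :=
      Submodule.sum_mem _ fun i _ => Submodule.smul_mem _ _
        ((mem_homogeneousSubmodule _ _).mpr (hvh i))
    have hc : ∀ j, coeff (Finsupp.single j 1) (∑ i, g i • v i) = 0 := by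
      intro j
      rw [coeff_sum]
      simp only [coeff_smul, smul_eq_mul]
      have := congrFun hg j
      simpa [Finset.sum_apply, hMdef] using this
    rw [homog_one_repr ((mem_homogeneousSubmodule _ _).mp hsumh)]
    simp [hc]
  have hex : ∃ m4 : Fin 5 → K, m4 ∉ Submodule.span K (Set.range M) := by
    by_contra h
    push_neg at h
    have htop : Submodule.span K (Set.range M) = ⊤ := Submodule.eq_top_iff'.mpr h
    have h4 : Module.finrank K (Submodule.span K (Set.range M)) = 4 := by
      rw [finrank_span_eq_card hM]; simp
    rw [htop, finrank_top] at h4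
    rw [Module.finrank_fin_fun] at h4
    omega
  obtain ⟨m4, hm4⟩ := hex
  set N : Fin 5 → Fin 5 → K := Fin.cons m4 M with hNdef
  have hN : LinearIndependent K N := linearIndependent_fin_cons.mpr ⟨hM, hm4⟩
  set A : Matrix (Fin 5) (Fin 5) K := Matrix.of N with hAdef
  have hA : IsUnit A := Matrix.linearIndependent_rows_iff_isUnit.mp hN
  set e := linEquiv A hA with hedef
  have heX : ∀ i : Fin 4, e (X i.succ) = v i := by
    intro i
    show linHom A (X i.succ) = v i
    rw [linHom_X, hrepr i]
    refine Finset.sum_congr rfl fun j _ => ?_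
    simp [hAdef, hNdef, Fin.cons_succ]
  have e0 : e (X 1) = n13 := by simpa [hv] using heX 0
  have e1 : e (X 2) = n31 := by simpa [hv] using heX 1
  have e2 : e (X 3) = n41 := by simpa [hv] using heX 2
  have e3 : e (X 4) = n42 := by simpa [hv] using heX 3
  set q := n31 * n43 - n42 * n23 - n41 * n33 with hqdef
  have hq : q ∈ Ideal.span ({n31, n41, n42} : Set (MvPolynomial (Fin 5) K)) := by
    refine sub_mem (sub_mem ?_ ?_) ?_
    · exact Ideal.mul_mem_right _ _ (Ideal.subset_span (by simp))
    · exact Ideal.mul_mem_right _ _ (Ideal.subset_span (by simp))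
    · exact Ideal.mul_mem_right _ _ (Ideal.subset_span (by simp))
  have hsymm : ∀ i : Fin 4, e.symm (v i) = X i.succ := fun i => by
    rw [← heX i, AlgEquiv.symm_apply_apply]
  have hQ : e.symm q ∈ Ideal.span ({X 2, X 3, X 4} : Set (MvPolynomial (Fin 5) K)) := by
    have hmem := Ideal.mem_map_of_mem (e.symm : MvPolynomial (Fin 5) K ≃+* MvPolynomial (Fin 5) K) hq
    rw [Ideal.map_span] at hmem
    simp only [Set.image_insert_eq, Set.image_singleton, RingHom.coe_coe,
      AlgEquiv.coe_ringEquiv] at hmem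
    have s1 : e.symm n31 = X 2 := by simpa [hv] using hsymm 1
    have s2 : e.symm n41 = X 3 := by simpa [hv] using hsymm 2
    have s3 : e.symm n42 = X 4 := by simpa [hv] using hsymm 3
    rwa [s1, s2, s3] at hmem
  have hred := reduced_identity hQ
  have hmap := congrArg
    (Ideal.map (e : MvPolynomial (Fin 5) K ≃+* MvPolynomial (Fin 5) K)) hred
  rw [map_inf_ringEquiv, Ideal.map_span, Ideal.map_span, Ideal.map_span] at hmap
  simp only [Set.image_insert_eq, Set.image_singleton, RingHom.coe_coe, map_mul,
    AlgEquiv.coe_ringEquiv, AlgEquiv.apply_symm_apply] at hmap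
  rw [e0, e1, e2, e3] at hmap
  exact hmap
end

section
/- Let ℓ_1, ℓ_2, ℓ_3, ℓ_4 be linear forms in R = K[x_0,…,x_4] with ℓ_1 = -z_2ℓ_2 - z_3ℓ_3 - z_4ℓ_4 for scalars z_i, let S_2 be the 4×4 syzygy matrix [[1,0,0,0],[z_2,0,-ℓ_4,ℓ_3],[z_3,ℓ_4,0,-ℓ_2],[z_4,-ℓ_3,ℓ_2,0]], and let X_2 be a 4×3 matrix with linear forms in its first row and scalars elsewhere. Set N = S_2·X_2 and let (i,j,k) denote the 3×3 minor of X_2 on rows i,j,k. Then the four maximal minors of N equal (up to a uniform sign convention) q·ℓ_1, q·ℓ_2, q·ℓ_3, q·ℓ_4, where q = ℓ_2·(1,3,4) - ℓ_3·(1,2,4) + ℓ_4·(1,2,3). -/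
open Matrix MvPolynomial

/-- Case `N = S₂·X₂` of the classification: with `ℓ₁ = -(z₂ℓ₂ + z₃ℓ₃ + z₄ℓ₄)` (indices
shifted to `0,…,3`), `S₂` the explicit `4 × 4` syzygy matrix and `X₂` a `4 × 3` matrix
with linear forms on the first row and scalars elsewhere, the four maximal minors of
`N = S₂·X₂` equal, up to sign, `q·ℓᵢ`, where
`q = ℓ₂·(1,3,4) - ℓ₃·(1,2,4) + ℓ₄·(1,2,3)` in terms of the `3 × 3` minors of `X₂`. -/
theorem minors_of_S2X2
    {K : Type*} [Field K] (h2 : (2 : K) ≠ 0)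
    (ℓ : Fin 4 → MvPolynomial (Fin 5) K)
    (hℓ : ∀ i, (ℓ i).IsHomogeneous 1)
    (z : Fin 3 → K)
    (hrel : ℓ 0 = -(C (z 0) * ℓ 1 + C (z 1) * ℓ 2 + C (z 2) * ℓ 3))
    (X₂ : Matrix (Fin 4) (Fin 3) (MvPolynomial (Fin 5) K))
    (hX1 : ∀ j, (X₂ 0 j).IsHomogeneous 1)
    (hXc : ∀ i : Fin 4, i ≠ 0 → ∀ j, ∃ c : K, X₂ i j = C c) :
    ∃ ε : Fin 4 → MvPolynomial (Fin 5) K, (∀ i, ε i = 1 ∨ ε i = -1) ∧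
      ∀ i : Fin 4,
        (((!![1, 0, 0, 0;
              C (z 0), 0, -ℓ 3, ℓ 2;
              C (z 1), ℓ 3, 0, -ℓ 1;
              C (z 2), -ℓ 2, ℓ 1, 0] : Matrix (Fin 4) (Fin 4) (MvPolynomial (Fin 5) K)) *
           X₂).submatrix i.succAbove id).det =
        ε i * ((ℓ 1 * (X₂.submatrix (Fin.succAbove 1) id).det
               - ℓ 2 * (X₂.submatrix (Fin.succAbove 2) id).det
               + ℓ 3 * (X₂.submatrix (Fin.succAbove 3) id).det) * ℓ i) := by
  have s0 : (Fin.succAbove (0 : Fin 4)) = ![1, 2, 3] := by decide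
  have s1 : (Fin.succAbove (1 : Fin 4)) = ![0, 2, 3] := by decide
  have s2 : (Fin.succAbove (2 : Fin 4)) = ![0, 1, 3] := by decide
  have s3 : (Fin.succAbove (3 : Fin 4)) = ![0, 1, 2] := by decide
  have h0 :
      (((!![1, 0, 0, 0;
            C (z 0), 0, -ℓ 3, ℓ 2;
            C (z 1), ℓ 3, 0, -ℓ 1;
            C (z 2), -ℓ 2, ℓ 1, 0] : Matrix (Fin 4) (Fin 4) (MvPolynomial (Fin 5) K)) *
         X₂).submatrix (Fin.succAbove (0 : Fin 4)) id).det =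
      (-1 : MvPolynomial (Fin 5) K) * ((ℓ 1 * (X₂.submatrix (Fin.succAbove 1) id).det
             - ℓ 2 * (X₂.submatrix (Fin.succAbove 2) id).det
             + ℓ 3 * (X₂.submatrix (Fin.succAbove 3) id).det) * ℓ 0) := by
    simp only [hrel, s0, s1, s2, s3, det_fin_three, submatrix_apply, mul_apply,
        Fin.sum_univ_four, id_eq, Fin.isValue, Matrix.cons_val', Matrix.cons_val_zero,
        Matrix.cons_val_one, Matrix.head_cons, Matrix.head_fin_const,
        Matrix.cons_val_fin_one, Matrix.empty_val', Matrix.of_apply,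
        Matrix.cons_val_two, Matrix.cons_val_three, Matrix.tail_cons]
    ring
  have h1 :
      (((!![1, 0, 0, 0;
            C (z 0), 0, -ℓ 3, ℓ 2;
            C (z 1), ℓ 3, 0, -ℓ 1;
            C (z 2), -ℓ 2, ℓ 1, 0] : Matrix (Fin 4) (Fin 4) (MvPolynomial (Fin 5) K)) *
         X₂).submatrix (Fin.succAbove (1 : Fin 4)) id).det =
      (1 : MvPolynomial (Fin 5) K) * ((ℓ 1 * (X₂.submatrix (Fin.succAbove 1) id).det
             - ℓ 2 * (X₂.submatrix (Fin.succAbove 2) id).det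
             + ℓ 3 * (X₂.submatrix (Fin.succAbove 3) id).det) * ℓ 1) := by
    simp only [hrel, s0, s1, s2, s3, det_fin_three, submatrix_apply, mul_apply,
        Fin.sum_univ_four, id_eq, Fin.isValue, Matrix.cons_val', Matrix.cons_val_zero,
        Matrix.cons_val_one, Matrix.head_cons, Matrix.head_fin_const,
        Matrix.cons_val_fin_one, Matrix.empty_val', Matrix.of_apply,
        Matrix.cons_val_two, Matrix.cons_val_three, Matrix.tail_cons]
    ring
  have h2 :
      (((!![1, 0, 0, 0;
            C (z 0), 0, -ℓ 3, ℓ 2;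
            C (z 1), ℓ 3, 0, -ℓ 1;
            C (z 2), -ℓ 2, ℓ 1, 0] : Matrix (Fin 4) (Fin 4) (MvPolynomial (Fin 5) K)) *
         X₂).submatrix (Fin.succAbove (2 : Fin 4)) id).det =
      (-1 : MvPolynomial (Fin 5) K) * ((ℓ 1 * (X₂.submatrix (Fin.succAbove 1) id).det
             - ℓ 2 * (X₂.submatrix (Fin.succAbove 2) id).det
             + ℓ 3 * (X₂.submatrix (Fin.succAbove 3) id).det) * ℓ 2) := by
    simp only [hrel, s0, s1, s2, s3, det_fin_three, submatrix_apply, mul_apply,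
        Fin.sum_univ_four, id_eq, Fin.isValue, Matrix.cons_val', Matrix.cons_val_zero,
        Matrix.cons_val_one, Matrix.head_cons, Matrix.head_fin_const,
        Matrix.cons_val_fin_one, Matrix.empty_val', Matrix.of_apply,
        Matrix.cons_val_two, Matrix.cons_val_three, Matrix.tail_cons]
    ring
  have h3 :
      (((!![1, 0, 0, 0;
            C (z 0), 0, -ℓ 3, ℓ 2;
            C (z 1), ℓ 3, 0, -ℓ 1;
            C (z 2), -ℓ 2, ℓ 1, 0] : Matrix (Fin 4) (Fin 4) (MvPolynomial (Fin 5) K)) *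
         X₂).submatrix (Fin.succAbove (3 : Fin 4)) id).det =
      (1 : MvPolynomial (Fin 5) K) * ((ℓ 1 * (X₂.submatrix (Fin.succAbove 1) id).det
             - ℓ 2 * (X₂.submatrix (Fin.succAbove 2) id).det
             + ℓ 3 * (X₂.submatrix (Fin.succAbove 3) id).det) * ℓ 3) := by
    simp only [hrel, s0, s1, s2, s3, det_fin_three, submatrix_apply, mul_apply,
        Fin.sum_univ_four, id_eq, Fin.isValue, Matrix.cons_val', Matrix.cons_val_zero,
        Matrix.cons_val_one, Matrix.head_cons, Matrix.head_fin_const,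
        Matrix.cons_val_fin_one, Matrix.empty_val', Matrix.of_apply,
        Matrix.cons_val_two, Matrix.cons_val_three, Matrix.tail_cons]
    ring
  refine ⟨![-1, 1, -1, 1], ?_, ?_⟩
  · intro i
    fin_cases i
    · exact Or.inr rfl
    · exact Or.inl rfl
    · exact Or.inr rfl
    · exact Or.inl rfl
  · intro i
    fin_cases i
    · exact h0
    · exact h1
    · exact h2
    · exact h3
end
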